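/- Let (L,[-,-],Δ=ad(r),α,r) be a quasi-triangular Hom-Lie bialgebra and t ∈ L⊗L with (α⊗α)(t)=t, τ(t)=−t, [[t,t]]^α + ↻(α⊗Δ)(t) = 0, and [[r,t]]^α + [[t,r]]^α + [[t,t]]^α = 0. Then (L, [-,-], ad(r+t), α, r+t) is a quasi-triangular Hom-Lie bialgebra. -/
import Mathlib


open TensorProduct

variable {k : Type*} [Field k]
variable {L : Type*} [AddCommGroup L] [Module k L]

/-- `[r₁₂, s₁₃]` -/
noncomputable def c1213 (β : L →ₗ[k] L →ₗ[k] L) (α : L →ₗ[k] L) :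
    (L ⊗[k] L) ⊗[k] (L ⊗[k] L) →ₗ[k] L ⊗[k] (L ⊗[k] L) :=
  (TensorProduct.map (TensorProduct.lift β) (TensorProduct.map α α)) ∘ₗ
    (TensorProduct.tensorTensorTensorComm k L L L L).toLinearMap

/-- `[r₁₂, s₂₃]` -/
noncomputable def c1223 (β : L →ₗ[k] L →ₗ[k] L) (α : L →ₗ[k] L) :
    (L ⊗[k] L) ⊗[k] (L ⊗[k] L) →ₗ[k] L ⊗[k] (L ⊗[k] L) :=
  (TensorProduct.map α ((TensorProduct.map (TensorProduct.lift β) α) ∘ₗ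
      (TensorProduct.assoc k L L L).symm.toLinearMap)) ∘ₗ
    (TensorProduct.assoc k L L (L ⊗[k] L)).toLinearMap

/-- `[r₁₃, s₂₃]` -/
noncomputable def c1323 (β : L →ₗ[k] L →ₗ[k] L) (α : L →ₗ[k] L) :
    (L ⊗[k] L) ⊗[k] (L ⊗[k] L) →ₗ[k] L ⊗[k] (L ⊗[k] L) :=
  (TensorProduct.assoc k L L L).toLinearMap ∘ₗ
    (TensorProduct.map (TensorProduct.map α α) (TensorProduct.lift β)) ∘ₗ
    (TensorProduct.tensorTensorTensorComm k L L L L).toLinearMap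

/-- `[[r,s]]^α = [r₁₂,s₁₃] + [r₁₂,s₂₃] + [r₁₃,s₂₃]` -/
noncomputable def chybe (β : L →ₗ[k] L →ₗ[k] L) (α : L →ₗ[k] L) (r s : L ⊗[k] L) :
    L ⊗[k] (L ⊗[k] L) :=
  c1213 β α (r ⊗ₜ s) + c1223 β α (r ⊗ₜ s) + c1323 β α (r ⊗ₜ s)

/-- `ad_x` on `L ⊗ L`. -/
noncomputable def adT2 (β : L →ₗ[k] L →ₗ[k] L) (α : L →ₗ[k] L) (x : L) :
    L ⊗[k] L →ₗ[k] L ⊗[k] L :=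
  TensorProduct.map (β x) α + TensorProduct.map α (β x)

/-- `ad_x` on `L ⊗ L ⊗ L`. -/
noncomputable def adT3 (β : L →ₗ[k] L →ₗ[k] L) (α : L →ₗ[k] L) (x : L) :
    L ⊗[k] (L ⊗[k] L) →ₗ[k] L ⊗[k] (L ⊗[k] L) :=
  TensorProduct.map (β x) (TensorProduct.map α α) +
    TensorProduct.map α (TensorProduct.map (β x) α) +
    TensorProduct.map α (TensorProduct.map α (β x))

/-- the cyclic permutation on `L ⊗ L ⊗ L`, `x⊗y⊗z ↦ z⊗x⊗y`. -/
noncomputable def cyc : L ⊗[k] (L ⊗[k] L) →ₗ[k] L ⊗[k] (L ⊗[k] L) :=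
  (TensorProduct.comm k (L ⊗[k] L) L).toLinearMap ∘ₗ
    (TensorProduct.assoc k L L L).symm.toLinearMap

/-- the cyclic sum `↻` on `L ⊗ L ⊗ L`. -/
noncomputable def cycSum : L ⊗[k] (L ⊗[k] L) →ₗ[k] L ⊗[k] (L ⊗[k] L) :=
  LinearMap.id + cyc + cyc ∘ₗ cyc

/-- `Δ = ad(r) : x ↦ ad_x(r)` as a linear map. -/
noncomputable def adr (β : L →ₗ[k] L →ₗ[k] L) (α : L →ₗ[k] L) (r : L ⊗[k] L) :
    L →ₗ[k] L ⊗[k] L where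
  toFun x := adT2 β α x r
  map_add' x y := by
    simp only [adT2, map_add, TensorProduct.map_add_left, TensorProduct.map_add_right,
      LinearMap.add_apply]
    abel
  map_smul' c x := by
    simp only [adT2, map_smul, TensorProduct.map_smul_left, TensorProduct.map_smul_right,
      LinearMap.add_apply, LinearMap.smul_apply, RingHom.id_apply, smul_add]

/-- Hom-Lie algebra axioms. -/
def IsHomLie (β : L →ₗ[k] L →ₗ[k] L) (α : L →ₗ[k] L) : Prop :=
  (∀ x y, β x y = - β y x) ∧
  (∀ x y, α (β x y) = β (α x) (α y)) ∧
  (∀ x y z, β (β x y) (α z) + β (β z x) (α y) + β (β y z) (α x) = 0)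

/-- Hom-Lie coalgebra axioms. -/
def IsHomLieCoalg (Δ : L →ₗ[k] L ⊗[k] L) (α : L →ₗ[k] L) : Prop :=
  (∀ x, Δ (α x) = TensorProduct.map α α (Δ x)) ∧
  (∀ x, TensorProduct.comm k L L (Δ x) = - Δ x) ∧
  (∀ x, cycSum (TensorProduct.map α Δ (Δ x)) = 0)

/-- Hom-Lie bialgebra axioms. -/
def IsHomLieBialg (β : L →ₗ[k] L →ₗ[k] L) (Δ : L →ₗ[k] L ⊗[k] L) (α : L →ₗ[k] L) : Prop :=
  IsHomLie β α ∧ IsHomLieCoalg Δ α ∧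
  (∀ x y, Δ (β x y) = adT2 β α (α x) (Δ y) - adT2 β α (α y) (Δ x))

section Aux

variable (β : L →ₗ[k] L →ₗ[k] L) (α : L →ₗ[k] L)

lemma adT2_tmul (x a b : L) :
    adT2 β α x (a ⊗ₜ[k] b) = β x a ⊗ₜ[k] α b + α a ⊗ₜ[k] β x b := by
  simp [adT2]

lemma adT3_tmul (x a b c : L) :
    adT3 β α x (a ⊗ₜ[k] (b ⊗ₜ[k] c)) =
      β x a ⊗ₜ[k] (α b ⊗ₜ[k] α c) + α a ⊗ₜ[k] (β x b ⊗ₜ[k] α c)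
        + α a ⊗ₜ[k] (α b ⊗ₜ[k] β x c) := by
  simp [adT3]

lemma cycSum_tmul (a b c : L) :
    cycSum (a ⊗ₜ[k] (b ⊗ₜ[k] c)) =
      a ⊗ₜ[k] (b ⊗ₜ[k] c) + c ⊗ₜ[k] (a ⊗ₜ[k] b) + b ⊗ₜ[k] (c ⊗ₜ[k] a) := by
  simp [cycSum, cyc]

lemma c1213_tmul (a b c d : L) :
    c1213 β α ((a ⊗ₜ[k] b) ⊗ₜ[k] (c ⊗ₜ[k] d)) = β a c ⊗ₜ[k] (α b ⊗ₜ[k] α d) := by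
  simp [c1213]

lemma c1223_tmul (a b c d : L) :
    c1223 β α ((a ⊗ₜ[k] b) ⊗ₜ[k] (c ⊗ₜ[k] d)) = α a ⊗ₜ[k] (β b c ⊗ₜ[k] α d) := by
  simp [c1223]

lemma c1323_tmul (a b c d : L) :
    c1323 β α ((a ⊗ₜ[k] b) ⊗ₜ[k] (c ⊗ₜ[k] d)) = α a ⊗ₜ[k] (α c ⊗ₜ[k] β b d) := by
  simp [c1323]

lemma adr_apply (u : L ⊗[k] L) (x : L) : adr β α u x = adT2 β α x u := rfl

/-- first half of `ad` -/
noncomputable def adrA (u : L ⊗[k] L) : L →ₗ[k] L ⊗[k] L where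
  toFun x := TensorProduct.map (β x) α u
  map_add' x y := by
    simp only [map_add, TensorProduct.map_add_left, LinearMap.add_apply]
  map_smul' c x := by
    simp only [map_smul, TensorProduct.map_smul_left, LinearMap.smul_apply, RingHom.id_apply]

/-- second half of `ad` -/
noncomputable def adrB (u : L ⊗[k] L) : L →ₗ[k] L ⊗[k] L where
  toFun x := TensorProduct.map α (β x) u
  map_add' x y := by
    simp only [map_add, TensorProduct.map_add_right, LinearMap.add_apply]
  map_smul' c x := by
    simp only [map_smul, TensorProduct.map_smul_right, LinearMap.smul_apply, RingHom.id_apply]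

lemma adr_eq (u : L ⊗[k] L) : adr β α u = adrA β α u + adrB β α u := by
  ext x
  simp [adr, adrA, adrB, adT2]

lemma adrA_apply (u : L ⊗[k] L) (y : L) : adrA β α u y = TensorProduct.map (β y) α u := rfl
lemma adrB_apply (u : L ⊗[k] L) (y : L) : adrB β α u y = TensorProduct.map α (β y) u := rfl

end Aux

section Aux2

variable (β : L →ₗ[k] L →ₗ[k] L) (α : L →ₗ[k] L)

/-- Jacobi, restated: `[αx,[y,z]] = [[x,y],αz] + [αy,[x,z]]`. -/
lemma jacX (h1 : ∀ x y, β x y = - β y x)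
    (h3 : ∀ x y z, β (β x y) (α z) + β (β z x) (α y) + β (β y z) (α x) = 0) (x y z : L) :
    β (α x) (β y z) = β (β x y) (α z) + β (α y) (β x z) := by
  have e2 : β (β x y) (α z) + β (β z x) (α y) = - β (β y z) (α x) :=
    eq_neg_of_add_eq_zero_left (h3 x y z)
  have hzx : β (β z x) (α y) = β (α y) (β x z) := by
    rw [h1 z x, h1 (α y) (β x z)]
    simp
  rw [h1 (α x) (β y z), ← e2, hzx]

/-- `τ` commutes with `ad_x`. -/
lemma comm_adT2 (x : L) (w : L ⊗[k] L) :
    TensorProduct.comm k L L (adT2 β α x w) = adT2 β α x (TensorProduct.comm k L L w) := by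
  induction w using TensorProduct.induction_on with
  | zero => simp
  | tmul a b => simp [adT2_tmul]; abel
  | add u v hu hv => simp only [map_add, hu, hv]

/-- `α⊗α` intertwines `ad_x` and `ad_{αx}`. -/
lemma mapaa_adT2 (h2 : ∀ x y, α (β x y) = β (α x) (α y)) (x : L) (w : L ⊗[k] L) :
    TensorProduct.map α α (adT2 β α x w) = adT2 β α (α x) (TensorProduct.map α α w) := by
  induction w using TensorProduct.induction_on with
  | zero => simp
  | tmul a b => simp [adT2_tmul, h2]
  | add u v hu hv => simp only [map_add, hu, hv]

/-- the 1-cocycle identity for `ad`. -/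
lemma adT2_cocycle (h1 : ∀ x y, β x y = - β y x)
    (h2 : ∀ x y, α (β x y) = β (α x) (α y))
    (h3 : ∀ x y z, β (β x y) (α z) + β (β z x) (α y) + β (β y z) (α x) = 0)
    (x y : L) (w : L ⊗[k] L) :
    adT2 β α (β x y) (TensorProduct.map α α w) =
      adT2 β α (α x) (adT2 β α y w) - adT2 β α (α y) (adT2 β α x w) := by
  induction w using TensorProduct.induction_on with
  | zero => simp
  | tmul a b =>
      simp only [TensorProduct.map_tmul, adT2_tmul, map_add]
      rw [jacX β α h1 h3 x y a, jacX β α h1 h3 x y b]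
      simp only [h2, adT2_tmul]
      simp only [TensorProduct.add_tmul, TensorProduct.tmul_add]
      abel
  | add u v hu hv =>
      simp only [map_add, hu, hv]
      abel

end Aux2

section Aux3

variable (β : L →ₗ[k] L →ₗ[k] L) (α : L →ₗ[k] L)

lemma adr_add (u v : L ⊗[k] L) : adr β α (u + v) = adr β α u + adr β α v := by
  ext x; simp [adr, adT2]; abel

lemma adrA_add (u v : L ⊗[k] L) : adrA β α (u + v) = adrA β α u + adrA β α v := by
  ext x; simp [adrA]

lemma adrB_add (u v : L ⊗[k] L) : adrB β α (u + v) = adrB β α u + adrB β α v := by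
  ext x; simp [adrB]

lemma adrA_zero : adrA β α (0 : L ⊗[k] L) = 0 := by ext x; simp [adrA]
lemma adrB_zero : adrB β α (0 : L ⊗[k] L) = 0 := by ext x; simp [adrB]
lemma adr_zero : adr β α (0 : L ⊗[k] L) = 0 := by ext x; simp [adr, adT2]

/-- `ad^{(3)}` acts as a derivation on `[·₁₂,·₁₃]`. -/
lemma K13 (h1 : ∀ x y, β x y = - β y x)
    (h2 : ∀ x y, α (β x y) = β (α x) (α y))
    (h3 : ∀ x y z, β (β x y) (α z) + β (β z x) (α y) + β (β y z) (α x) = 0)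
    (z : L) (P Q : L ⊗[k] L) :
    adT3 β α (α z) (c1213 β α (P ⊗ₜ[k] Q)) =
      c1213 β α ((adT2 β α z P) ⊗ₜ[k] (TensorProduct.map α α Q)) +
        c1213 β α ((TensorProduct.map α α P) ⊗ₜ[k] (adT2 β α z Q)) := by
  induction P using TensorProduct.induction_on with
  | zero => simp
  | add w₁ w₂ ih₁ ih₂ =>
      simp only [TensorProduct.add_tmul, map_add, LinearMap.add_apply]
      linear_combination (norm := abel) ih₁ + ih₂
  | tmul a b =>
      induction Q using TensorProduct.induction_on with
      | zero => simp
      | add w₁ w₂ ih₁ ih₂ =>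
          simp only [TensorProduct.tmul_add, map_add, LinearMap.add_apply]
          linear_combination (norm := abel) ih₁ + ih₂
      | tmul c d =>
          simp only [c1213_tmul, adT3_tmul, adT2_tmul, TensorProduct.map_tmul,
            TensorProduct.add_tmul, TensorProduct.tmul_add, map_add, h2]
          rw [jacX β α h1 h3 z a c]
          simp only [TensorProduct.add_tmul]
          abel

/-- `ad^{(3)}` acts as a derivation on `[·₁₃,·₂₃]`. -/
lemma K33 (h1 : ∀ x y, β x y = - β y x)
    (h2 : ∀ x y, α (β x y) = β (α x) (α y))
    (h3 : ∀ x y z, β (β x y) (α z) + β (β z x) (α y) + β (β y z) (α x) = 0)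
    (z : L) (P Q : L ⊗[k] L) :
    adT3 β α (α z) (c1323 β α (P ⊗ₜ[k] Q)) =
      c1323 β α ((adT2 β α z P) ⊗ₜ[k] (TensorProduct.map α α Q)) +
        c1323 β α ((TensorProduct.map α α P) ⊗ₜ[k] (adT2 β α z Q)) := by
  induction P using TensorProduct.induction_on with
  | zero => simp
  | add w₁ w₂ ih₁ ih₂ =>
      simp only [TensorProduct.add_tmul, map_add, LinearMap.add_apply]
      linear_combination (norm := abel) ih₁ + ih₂
  | tmul a b =>
      induction Q using TensorProduct.induction_on with
      | zero => simp
      | add w₁ w₂ ih₁ ih₂ =>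
          simp only [TensorProduct.tmul_add, map_add, LinearMap.add_apply]
          linear_combination (norm := abel) ih₁ + ih₂
      | tmul c d =>
          simp only [c1323_tmul, adT3_tmul, adT2_tmul, TensorProduct.map_tmul,
            TensorProduct.add_tmul, TensorProduct.tmul_add, map_add, h2]
          rw [jacX β α h1 h3 z b d]
          simp only [TensorProduct.tmul_add]
          abel

/-- exchange lemma: `[v₁₂,ρ₁₃]`-type term vs `[ρ₁₃,(τv)₂₃]`-type term. -/
lemma LC3 (h1 : ∀ x y, β x y = - β y x) (ρ v : L ⊗[k] L) :
    c1213 β α (v ⊗ₜ[k] ρ) - c1323 β α (ρ ⊗ₜ[k] (TensorProduct.comm k L L v)) =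
      TensorProduct.map LinearMap.id (TensorProduct.comm k L L).toLinearMap
        ((TensorProduct.assoc k L L L)
          ((TensorProduct.map (adr β α ρ) α) v)) := by
  induction v using TensorProduct.induction_on with
  | zero => simp
  | add w₁ w₂ ih₁ ih₂ =>
      simp only [TensorProduct.add_tmul, TensorProduct.tmul_add, map_add, LinearMap.add_apply]
      linear_combination (norm := abel) ih₁ + ih₂
  | tmul p q =>
      induction ρ using TensorProduct.induction_on with
      | zero => simp [adr_zero]
      | add w₁ w₂ ih₁ ih₂ =>
          simp only [TensorProduct.add_tmul, TensorProduct.tmul_add, map_add,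
            LinearMap.add_apply, adr_add, TensorProduct.map_add_left]
          linear_combination (norm := abel) ih₁ + ih₂
      | tmul g h =>
          simp only [c1213_tmul, c1323_tmul, TensorProduct.comm_tmul, TensorProduct.map_tmul,
            adr_apply, adT2_tmul, TensorProduct.add_tmul, map_add, LinearMap.id_coe, id_eq,
            TensorProduct.assoc_tmul]
          rw [h1 h p]
          simp only [TensorProduct.tmul_neg]
          abel

end Aux3

section Aux4

variable (β : L →ₗ[k] L →ₗ[k] L) (α : L →ₗ[k] L)

/-- the key pointwise identity behind the co-Jacobi identity of a perturbed
quasi-triangular structure. -/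
lemma master (h1 : ∀ x y, β x y = - β y x)
    (h2 : ∀ x y, α (β x y) = β (α x) (α y))
    (h3 : ∀ x y z, β (β x y) (α z) + β (β z x) (α y) + β (β y z) (α x) = 0)
    (x : L) (s u : L ⊗[k] L) :
    cycSum (TensorProduct.map α (adrA β α (TensorProduct.map α α u)) (adT2 β α x s)) -
      cycSum (TensorProduct.map α (adrB β α (TensorProduct.map α α s))
        (adT2 β α x (TensorProduct.comm k L L u))) =
    - adT3 β α (α x) (c1213 β α (u ⊗ₜ[k] (TensorProduct.comm k L L s)))
      + adT3 β α (α x) (c1223 β α (s ⊗ₜ[k] u))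
      - adT3 β α (α x) (c1323 β α ((TensorProduct.comm k L L u) ⊗ₜ[k] s)) := by
  induction s using TensorProduct.induction_on with
  | zero => simp [adrB_zero]
  | add w₁ w₂ ih₁ ih₂ =>
      simp only [map_add, adrB_add, TensorProduct.map_add_right, LinearMap.add_apply,
        TensorProduct.add_tmul, TensorProduct.tmul_add]
      linear_combination (norm := abel) ih₁ + ih₂
  | tmul a b =>
      induction u using TensorProduct.induction_on with
      | zero => simp [adrA_zero]
      | add w₁ w₂ ih₁ ih₂ =>
          simp only [map_add, adrA_add, TensorProduct.map_add_right, LinearMap.add_apply,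
            TensorProduct.add_tmul, TensorProduct.tmul_add]
          linear_combination (norm := abel) ih₁ + ih₂
      | tmul c d =>
          simp only [TensorProduct.map_tmul, TensorProduct.comm_tmul, adT2_tmul,
            adrA_apply, adrB_apply, map_add, cycSum_tmul, c1213_tmul, c1223_tmul,
            c1323_tmul, adT3_tmul, h2]
          rw [jacX β α h1 h3 x b c, jacX β α h1 h3 x c b,
            h1 (α c) (α b), h1 (α c) (β x b), h1 (α b) (β x c)]
          simp only [TensorProduct.tmul_add, TensorProduct.add_tmul, TensorProduct.tmul_neg,
            TensorProduct.neg_tmul, map_add, map_neg, cycSum_tmul]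
          abel

end Aux4

/-- perturbation of a quasi-triangular Hom-Lie bialgebra:
`(L, [-,-], ad(r+t), α, r+t)` is again quasi-triangular. -/
theorem stmt19 {k : Type*} [Field k] [CharZero k] {L : Type*} [AddCommGroup L] [Module k L]
    (β : L →ₗ[k] L →ₗ[k] L) (α : L →ₗ[k] L) (r : L ⊗[k] L)
    (hbi : IsHomLieBialg β (adr β α r) α)
    (hr : TensorProduct.map α α r = r)
    (hchybe : chybe β α r r = 0)
    (t : L ⊗[k] L)
    (ht : TensorProduct.map α α t = t)
    (hanti : TensorProduct.comm k L L t = - t)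
    (hpert : chybe β α t t + cycSum (TensorProduct.map α (adr β α r) t) = 0)
    (hmix : chybe β α r t + chybe β α t r + chybe β α t t = 0) :
    IsHomLieBialg β (adr β α (r + t)) α ∧
      TensorProduct.map α α (r + t) = r + t ∧
      chybe β α (r + t) (r + t) = 0 := by
  obtain ⟨⟨h1, h2, h3⟩, ⟨hc1, hc2, hc3⟩, hcompat⟩ := hbi
  -- the invariant symmetric part ρ = r + τ r
  set ρ : L ⊗[k] L := r + TensorProduct.comm k L L r with hρdef
  have hinv : ∀ y, adT2 β α y ρ = 0 := by
    intro y
    have hy := hc2 y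
    rw [adr_apply] at hy
    have h' : adT2 β α y (TensorProduct.comm k L L r) = - adT2 β α y r := by
      rw [← comm_adT2 β α y r, hy]
    rw [hρdef, map_add, h']
    abel
  have hadrρ : adr β α ρ = 0 := by
    ext y; rw [adr_apply, hinv y]; rfl
  -- invariance of r + t
  have hv : TensorProduct.map α α (r + t) = r + t := by rw [map_add, hr, ht]
  -- τ(r+t) = ρ - (r+t)
  have hcommv : TensorProduct.comm k L L (r + t) = ρ - (r + t) := by
    rw [map_add, hanti, hρdef]; abel
  -- CHYBE for r + t
  have hch : chybe β α (r + t) (r + t) = 0 := by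
    have expand : chybe β α (r + t) (r + t) =
        chybe β α r r + (chybe β α r t + chybe β α t r + chybe β α t t) := by
      simp only [chybe, TensorProduct.add_tmul, TensorProduct.tmul_add, map_add]
      abel
    rw [expand, hchybe, hmix, add_zero]
  refine ⟨⟨⟨h1, h2, h3⟩, ⟨?_, ?_, ?_⟩, ?_⟩, hv, hch⟩
  · -- Δ'(α x) = (α⊗α) Δ' x
    intro x
    rw [adr_apply, adr_apply, mapaa_adT2 β α h2 x (r + t), hv]
  · -- antisymmetry of Δ'
    intro x
    rw [adr_apply, comm_adT2, hcommv, map_sub, hinv x, zero_sub]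
  · -- co-Jacobi for Δ'
    intro x
    have hch' : c1213 β α ((r+t) ⊗ₜ[k] (r+t)) + c1223 β α ((r+t) ⊗ₜ[k] (r+t)) +
        c1323 β α ((r+t) ⊗ₜ[k] (r+t)) = 0 := hch
    have F1 : adT3 β α (α x) (c1213 β α ((r+t) ⊗ₜ[k] (r+t)))
        + adT3 β α (α x) (c1223 β α ((r+t) ⊗ₜ[k] (r+t)))
        + adT3 β α (α x) (c1323 β α ((r+t) ⊗ₜ[k] (r+t))) = 0 := by
      have := congrArg (adT3 β α (α x)) hch'
      simpa only [map_add, map_zero] using this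
    have hmap0 : TensorProduct.map (0 : L →ₗ[k] L ⊗[k] L) α = 0 := by
      ext p q; simp
    have hx1 : c1213 β α ((r+t) ⊗ₜ[k] ρ) =
        c1323 β α (ρ ⊗ₜ[k] (TensorProduct.comm k L L (r+t))) := by
      have hl := LC3 β α h1 ρ (r + t)
      rw [hadrρ, hmap0] at hl
      simp only [map_zero, LinearMap.zero_apply] at hl
      exact sub_eq_zero.mp hl
    have h33 : adT3 β α (α x) (c1323 β α (ρ ⊗ₜ[k] ρ)) = 0 := by
      rw [K33 β α h1 h2 h3 x ρ ρ, hinv x]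
      simp
    have F2 : adT3 β α (α x) (c1213 β α ((r+t) ⊗ₜ[k] ρ))
        + adT3 β α (α x) (c1323 β α (ρ ⊗ₜ[k] (r+t))) = 0 := by
      rw [hx1, hcommv]
      rw [TensorProduct.tmul_sub, map_sub, map_sub]
      linear_combination (norm := abel) h33
    have e1 : cycSum (TensorProduct.map α (adrA β α (r+t)) (adT2 β α x (r+t)))
        = cycSum (TensorProduct.map α (adrA β α (TensorProduct.map α α (r+t)))
            (adT2 β α x (r+t))) := by rw [hv]
    have e2 : cycSum (TensorProduct.map α (adrB β α (r+t)) (adT2 β α x (r+t)))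
        = - cycSum (TensorProduct.map α (adrB β α (TensorProduct.map α α (r+t)))
            (adT2 β α x (TensorProduct.comm k L L (r+t)))) := by
      rw [hv, hcommv, map_sub, hinv x, zero_sub, map_neg, map_neg, neg_neg]
    rw [adr_apply, adr_eq β α (r+t), TensorProduct.map_add_right, LinearMap.add_apply,
      map_add, e1, e2, ← sub_eq_add_neg, master β α h1 h2 h3 x (r+t) (r+t), hcommv]
    simp only [TensorProduct.tmul_sub, TensorProduct.sub_tmul, map_sub]
    linear_combination (norm := abel) F1 - F2
  · -- compatibility
    intro x y
    rw [adr_apply, adr_apply, adr_apply]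
    conv_lhs => rw [← hv]
    exact adT2_cocycle β α h1 h2 h3 x y (r + t)
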